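/- Let M' be a p×q binary matrix (with p, q ≥ 1) containing exactly n entries equal to 1 that is maximal, i.e., for every i ∈ {1,…,p−1} there is a column j with M'_{i,j} = M'_{i+1,j} = 1, and for every j ∈ {1,…,q−1} there is a row i with M'_{i,j} = M'_{i,j+1} = 1. Then for every binary matrix N (of any size) containing exactly n entries equal to 1, one has d(N) ≤ 2·√n · d(M') + 4·√n. In particular, every algorithm returning a maximal feasible solution of the Maximum Matrix Contraction problem approximates the optimal density to within a factor O(√n). -/

import Mathlib

/-- The density of a matrix with natural number entries: the number of unordered pairs
of distinct cells, both holding a 1, that are within distance 1 in each coordinate. -/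
def density {p q : ℕ} (M : Matrix (Fin p) (Fin q) ℕ) : ℕ :=
  (Finset.univ.filter fun x : (Fin p × Fin q) × (Fin p × Fin q) =>
    x.1 ≠ x.2 ∧ M x.1.1 x.1.2 = 1 ∧ M x.2.1 x.2.2 = 1 ∧
    (x.1.1.val ≤ x.2.1.val + 1 ∧ x.2.1.val ≤ x.1.1.val + 1) ∧
    (x.1.2.val ≤ x.2.2.val + 1 ∧ x.2.2.val ≤ x.1.2.val + 1)).card / 2

/-- Number of entries equal to 1. -/
def numOnes {p q : ℕ} (M : Matrix (Fin p) (Fin q) ℕ) : ℕ :=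
  (Finset.univ.filter fun x : Fin p × Fin q => M x.1 x.2 = 1).card

/-- The line contraction matrix (0-based index `i`, contracting rows `i` and `i+1`). -/
def lineContraction (p : ℕ) (i : ℕ) : Matrix (Fin p) (Fin p) ℕ :=
  Matrix.of fun k l =>
    if (k.val < i ∧ l = k) ∨ (k.val = i ∧ (l.val = i ∨ l.val = i + 1)) ∨
       (i < k.val ∧ k.val + 1 < p ∧ l.val = k.val + 1) then 1 else 0

/-- The column contraction matrix (0-based index `j`, contracting columns `j` and `j+1`). -/
def colContraction (q : ℕ) (j : ℕ) : Matrix (Fin q) (Fin q) ℕ :=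
  Matrix.of fun k l =>
    if (k.val ≤ j ∧ l = k) ∨ (j < k.val ∧ l.val + 1 = k.val) then 1 else 0

/-- The contraction of the sorted list of lines `I` and columns `J` of `M`. -/
def contraction {p q : ℕ} (M : Matrix (Fin p) (Fin q) ℕ) (I J : List ℕ) :
    Matrix (Fin p) (Fin q) ℕ :=
  (I.map (lineContraction p)).prod * M * ((J.reverse).map (colContraction q)).prod

lemma numOnes_le {p q : ℕ} (M : Matrix (Fin p) (Fin q) ℕ) : numOnes M ≤ p * q := by
  calc numOnes M ≤ (Finset.univ : Finset (Fin p × Fin q)).card := Finset.card_filter_le _ _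
  _ = p * q := by simp

lemma density_le_four {p q : ℕ} (N : Matrix (Fin p) (Fin q) ℕ) :
    density N ≤ 4 * numOnes N := by
  classical
  unfold density
  have key : (Finset.univ.filter fun x : (Fin p × Fin q) × (Fin p × Fin q) =>
      x.1 ≠ x.2 ∧ N x.1.1 x.1.2 = 1 ∧ N x.2.1 x.2.2 = 1 ∧
      (x.1.1.val ≤ x.2.1.val + 1 ∧ x.2.1.val ≤ x.1.1.val + 1) ∧
      (x.1.2.val ≤ x.2.2.val + 1 ∧ x.2.2.val ≤ x.1.2.val + 1)).card ≤ 8 * numOnes N := by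
    have h : (Finset.univ.filter fun x : (Fin p × Fin q) × (Fin p × Fin q) =>
        x.1 ≠ x.2 ∧ N x.1.1 x.1.2 = 1 ∧ N x.2.1 x.2.2 = 1 ∧
        (x.1.1.val ≤ x.2.1.val + 1 ∧ x.2.1.val ≤ x.1.1.val + 1) ∧
        (x.1.2.val ≤ x.2.2.val + 1 ∧ x.2.2.val ≤ x.1.2.val + 1)).card ≤
        ((Finset.univ.filter fun x : Fin p × Fin q => N x.1 x.2 = 1) ×ˢ
        ((({0,1,2} : Finset ℕ) ×ˢ ({0,1,2} : Finset ℕ)).erase (1,1))).card :=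
      Finset.card_le_card_of_injOn
        (fun x => (x.1, (x.2.1.val + 1 - x.1.1.val, x.2.2.val + 1 - x.1.2.val))) ?_ ?_
    · refine h.trans ?_
      rw [Finset.card_product]
      have h8 : ((({0,1,2} : Finset ℕ) ×ˢ ({0,1,2} : Finset ℕ)).erase (1,1)).card = 8 := by decide
      rw [h8]; unfold numOnes; omega
    · intro x hx
      simp only [Finset.mem_coe, Finset.mem_filter, Finset.mem_univ, true_and] at hx
      obtain ⟨hne, h1, h2, ⟨ha, hb⟩, ⟨hc, hd⟩⟩ := hx
      simp only [Finset.mem_coe, Finset.mem_product, Finset.mem_erase, Finset.mem_filter, Finset.mem_univ,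
        true_and, Finset.mem_insert, Finset.mem_singleton, Prod.mk.injEq, Ne, not_and]
      refine ⟨h1, fun he1 he2 => ?_, by omega, by omega⟩
      apply hne
      have e1 : x.1.1.val = x.2.1.val := by omega
      have e2 : x.1.2.val = x.2.2.val := by omega
      exact Prod.ext (Fin.ext e1) (Fin.ext e2)
    · intro x hx y hy heq
      simp only [Finset.mem_coe, Finset.mem_filter, Finset.mem_univ, true_and] at hx hy
      obtain ⟨-, -, -, ⟨ha, hb⟩, ⟨hc, hd⟩⟩ := hx
      obtain ⟨-, -, -, ⟨ha', hb'⟩, ⟨hc', hd'⟩⟩ := hy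
      simp only [Prod.mk.injEq] at heq
      obtain ⟨e0, e1, e2⟩ := heq
      have e1' : x.1.1.val = y.1.1.val := by rw [e0]
      have e2' : x.1.2.val = y.1.2.val := by rw [e0]
      have r1 : x.2.1.val = y.2.1.val := by omega
      have r2 : x.2.2.val = y.2.2.val := by omega
      exact Prod.ext e0 (Prod.ext (Fin.ext r1) (Fin.ext r2))
  omega

lemma density_lower {p q : ℕ} (hp : 1 ≤ p) (hq : 1 ≤ q) (M' : Matrix (Fin p) (Fin q) ℕ)
    (hrows : ∀ i : ℕ, ∀ hi : i + 1 < p, ∃ j : Fin q,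
      M' ⟨i, by omega⟩ j = 1 ∧ M' ⟨i + 1, hi⟩ j = 1)
    (hcols : ∀ j : ℕ, ∀ hj : j + 1 < q, ∃ i : Fin p,
      M' i ⟨j, by omega⟩ = 1 ∧ M' i ⟨j + 1, hj⟩ = 1) :
    (p - 1) + (q - 1) ≤ density M' := by
  classical
  set S := (Finset.univ.filter fun x : (Fin p × Fin q) × (Fin p × Fin q) =>
    x.1 ≠ x.2 ∧ M' x.1.1 x.1.2 = 1 ∧ M' x.2.1 x.2.2 = 1 ∧
    (x.1.1.val ≤ x.2.1.val + 1 ∧ x.2.1.val ≤ x.1.1.val + 1) ∧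
    (x.1.2.val ≤ x.2.2.val + 1 ∧ x.2.2.val ≤ x.1.2.val + 1)) with hS
  have hgoal : density M' = S.card / 2 := rfl
  rw [hgoal, Nat.le_div_iff_mul_le (by norm_num)]
  set m := (p - 1) + (q - 1) with hm
  set rj : ℕ → Fin q := fun i => if h : i + 1 < p then (hrows i h).choose else ⟨0, hq⟩ with hrj
  set ci : ℕ → Fin p := fun j => if h : j + 1 < q then (hcols j h).choose else ⟨0, hp⟩ with hci
  set A : ℕ → (Fin p × Fin q) × (Fin p × Fin q) := fun k =>
    if h : k < p - 1 then
      ((⟨k, by omega⟩, rj k), (⟨k + 1, by omega⟩, rj k))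
    else
      ((ci (k - (p - 1)), ⟨min (k - (p - 1)) (q - 1), by omega⟩),
       (ci (k - (p - 1)), ⟨min (k - (p - 1) + 1) (q - 1), by omega⟩)) with hA
  -- A k is "ascending": coordinate sums
  have hAasc : ∀ k < m, (A k).1.1.val + (A k).1.2.val + 1 = (A k).2.1.val + (A k).2.2.val := by
    intro k hk
    by_cases h : k < p - 1
    · simp only [hA, dif_pos h]; omega
    · simp only [hA, dif_neg h]; omega
  -- injectivity of A
  have hAinj : ∀ k < m, ∀ k' < m, A k = A k' → k = k' := by
    intro k hk k' hk' he
    have e11 := congrArg (fun z : (Fin p × Fin q) × (Fin p × Fin q) => z.1.1.val) he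
    have e21 := congrArg (fun z : (Fin p × Fin q) × (Fin p × Fin q) => z.2.1.val) he
    have e12 := congrArg (fun z : (Fin p × Fin q) × (Fin p × Fin q) => z.1.2.val) he
    by_cases h : k < p - 1 <;> by_cases h' : k' < p - 1 <;>
      simp only [hA, dif_pos, dif_neg, h, h', dite_true, dite_false] at e11 e21 e12 <;>
      omega
  -- membership of A k in S
  have hAmem : ∀ k < m, A k ∈ S := by
    intro k hk
    rw [hS, Finset.mem_filter]
    refine ⟨Finset.mem_univ _, ?_, ?_, ?_, ?_, ?_⟩
    · intro he
      have hc := congrArg (fun z : Fin p × Fin q => z.1.val + z.2.val) he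
      have h2 := hAasc k hk
      omega
    · by_cases h : k < p - 1
      · have hk2 : k + 1 < p := by omega
        simp only [hA, dif_pos h]
        show M' ⟨k, _⟩ (rj k) = 1
        simp only [hrj, dif_pos hk2]
        exact (hrows k hk2).choose_spec.1
      · have h2 : k - (p - 1) + 1 < q := by omega
        simp only [hA, dif_neg h]
        show M' (ci (k - (p - 1))) ⟨min (k - (p - 1)) (q - 1), _⟩ = 1
        have hfin : (⟨min (k - (p - 1)) (q - 1), by omega⟩ : Fin q) =
            ⟨k - (p - 1), by omega⟩ := Fin.ext (by simp; omega)
        rw [hfin]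
        simp only [hci, dif_pos h2]
        exact (hcols (k - (p - 1)) h2).choose_spec.1
    · by_cases h : k < p - 1
      · have hk2 : k + 1 < p := by omega
        simp only [hA, dif_pos h]
        show M' ⟨k + 1, _⟩ (rj k) = 1
        simp only [hrj, dif_pos hk2]
        exact (hrows k hk2).choose_spec.2
      · have h2 : k - (p - 1) + 1 < q := by omega
        simp only [hA, dif_neg h]
        show M' (ci (k - (p - 1))) ⟨min (k - (p - 1) + 1) (q - 1), _⟩ = 1
        have hfin : (⟨min (k - (p - 1) + 1) (q - 1), by omega⟩ : Fin q) =
            ⟨k - (p - 1) + 1, by omega⟩ := Fin.ext (by simp; omega)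
        rw [hfin]
        simp only [hci, dif_pos h2]
        exact (hcols (k - (p - 1)) h2).choose_spec.2
    · by_cases h : k < p - 1 <;> simp only [hA, dif_pos, dif_neg, h, dite_true, dite_false] <;>
        constructor <;> omega
    · by_cases h : k < p - 1 <;> simp only [hA, dif_pos, dif_neg, h, dite_true, dite_false] <;>
        constructor <;> omega
  -- S is symmetric under swap
  have hswap : ∀ x ∈ S, Prod.swap x ∈ S := by
    intro x hx
    rw [hS, Finset.mem_filter] at hx ⊢
    obtain ⟨-, hne, h1, h2, hd1, hd2⟩ := hx
    exact ⟨Finset.mem_univ _, fun he => hne he.symm, h2, h1, ⟨hd1.2, hd1.1⟩, ⟨hd2.2, hd2.1⟩⟩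
  have hcard : m * 2 ≤ S.card := by
    have h := Finset.card_le_card_of_injOn
      (f := fun kb : ℕ × Bool => if kb.2 then A kb.1 else Prod.swap (A kb.1))
      (s := Finset.range m ×ˢ (Finset.univ : Finset Bool)) (t := S) ?_ ?_
    · simpa [Finset.card_product] using h
    · rintro ⟨k, b⟩ hkb
      simp only [Finset.mem_coe, Finset.mem_product, Finset.mem_range] at hkb
      cases b
      · exact hswap _ (hAmem k hkb.1)
      · simpa using hAmem k hkb.1
    · rintro ⟨k, b⟩ hkb ⟨k', b'⟩ hkb' he
      simp only [Finset.mem_coe, Finset.mem_product, Finset.mem_range] at hkb hkb'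
      have hsum := hAasc k hkb.1
      have hsum' := hAasc k' hkb'.1
      cases b <;> cases b' <;> simp only [if_true, if_false, Bool.false_eq_true] at he
      · have : A k = A k' := by
          have := congrArg Prod.swap he; simpa using this
        rw [hAinj k hkb.1 k' hkb'.1 this]
      · exfalso
        have e1 := congrArg (fun z : (Fin p × Fin q) × (Fin p × Fin q) =>
          z.1.1.val + z.1.2.val) he
        have e2 := congrArg (fun z : (Fin p × Fin q) × (Fin p × Fin q) =>
          z.2.1.val + z.2.2.val) he
        simp only [Prod.fst_swap, Prod.snd_swap] at e1 e2
        omega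
      · exfalso
        have e1 := congrArg (fun z : (Fin p × Fin q) × (Fin p × Fin q) =>
          z.1.1.val + z.1.2.val) he
        have e2 := congrArg (fun z : (Fin p × Fin q) × (Fin p × Fin q) =>
          z.2.1.val + z.2.2.val) he
        simp only [Prod.fst_swap, Prod.snd_swap] at e1 e2
        omega
      · rw [hAinj k hkb.1 k' hkb'.1 he]
  omega

/-- Any maximal solution is a 2√n-approximation: the density of any binary matrix N
with n ones is at most 2√n · d(M') + 4√n for every maximal binary matrix M' with n ones. -/
theorem maximal_is_approximation {p q p' q' n : ℕ} (hp : 1 ≤ p) (hq : 1 ≤ q)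
    (M' : Matrix (Fin p) (Fin q) ℕ) (hM' : ∀ i j, M' i j ≤ 1) (hn' : numOnes M' = n)
    (hrows : ∀ i : ℕ, ∀ hi : i + 1 < p, ∃ j : Fin q,
      M' ⟨i, by omega⟩ j = 1 ∧ M' ⟨i + 1, hi⟩ j = 1)
    (hcols : ∀ j : ℕ, ∀ hj : j + 1 < q, ∃ i : Fin p,
      M' i ⟨j, by omega⟩ = 1 ∧ M' i ⟨j + 1, hj⟩ = 1)
    (N : Matrix (Fin p') (Fin q') ℕ) (hN : ∀ i j, N i j ≤ 1) (hnN : numOnes N = n) :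
    (density N : ℝ) ≤ 2 * Real.sqrt n * (density M' : ℝ) + 4 * Real.sqrt n := by
  have hA : (density N : ℝ) ≤ 4 * (n : ℝ) := by
    have h := density_le_four N
    rw [hnN] at h
    exact_mod_cast h
  have hBnat : (p - 1) + (q - 1) ≤ density M' := density_lower hp hq M' hrows hcols
  have hpq : p + q ≤ density M' + 2 := by omega
  have hnpq : n ≤ p * q := hn' ▸ numOnes_le M'
  set s := Real.sqrt n with hs
  have hs0 : 0 ≤ s := Real.sqrt_nonneg _
  have hs2 : s ^ 2 = (n : ℝ) := Real.sq_sqrt (by positivity)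
  have h2s : 2 * s ≤ (p : ℝ) + q := by
    have h1 : s ≤ Real.sqrt ((p : ℝ) * q) := Real.sqrt_le_sqrt (by exact_mod_cast hnpq)
    have h2 : Real.sqrt ((p : ℝ) * q) ≤ ((p : ℝ) + q) / 2 := by
      rw [show ((p:ℝ)+q)/2 = Real.sqrt ((((p:ℝ)+q)/2)^2) from
        (Real.sqrt_sq (by positivity)).symm]
      exact Real.sqrt_le_sqrt (by nlinarith [sq_nonneg ((p:ℝ) - q)])
    linarith
  have hB : 2 * s ≤ (density M' : ℝ) + 2 := by
    have hc : ((p : ℝ) + q) ≤ (density M' : ℝ) + 2 := by exact_mod_cast hpq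
    linarith
  nlinarith [mul_le_mul_of_nonneg_left hB (by linarith : (0:ℝ) ≤ 2 * s)]
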